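/- For every metric space (S,ρ), every sequence x : ℕ → S, all integers m, k, n ≥ 1 and every real r ≥ 0, the k-recurrence rate satisfies RR^m_k(x,n,r) = k·C^m_k(x,n,r) − (k − 1)·C^m_{k+1}(x,n,r). -/

import Mathlib

/-! Let `A_j` count the points that start `j` consecutive diagonal recurrences (so `A_j = n² C_j`)
and `B_j` those among them that also start a line. Shifting one step down the diagonal gives
`A_j = B_j + A_{j+1}`, and a line start whose run has length at least `j` either has a line of
length exactly `j` or a run of length `j + 1`, so `B_j = L_j + B_{j+1}`. Summing by parts,
`Σ_{l ≥ k} l L_l = k B_k + A_{k+1} = k A_k - (k - 1) A_{k+1}`. -/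

open Filter Topology MeasureTheory

/-- `dmax h x y = max_{0 ≤ l < h} dist (x l) (y l)` (equals 0 if `h = 0`). -/
noncomputable def dmax {S : Type*} [MetricSpace S] (h : ℕ) (x y : ℕ → S) : ℝ :=
  (((Finset.range h).sup fun l => nndist (x l) (y l) : NNReal) : ℝ)

/-- the shifted sequence `x^{(i)}`. -/
def shift {S : Type*} (i : ℕ) (x : ℕ → S) : ℕ → S := fun l => x (i + l)

/-- `(i,j)` is an `r`-recurrence in the `m`'th embedding of the trajectory of `x`. -/
def isRec {S : Type*} [MetricSpace S] (m : ℕ) (x : ℕ → S) (r : ℝ) (i j : ℕ) : Prop :=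
  dmax m (shift i x) (shift j x) ≤ r

open Classical in
/-- `L^m_k(x,n,r)`: the number of diagonal lines of length `k`
in the `n × n` recurrence plot. -/
noncomputable def Lcount {S : Type*} [MetricSpace S] (m k : ℕ) (x : ℕ → S) (n : ℕ)
    (r : ℝ) : ℕ :=
  ((Finset.range (n + 1) ×ˢ Finset.range (n + 1)).filter fun p =>
    p.1 + k ≤ n ∧ p.2 + k ≤ n ∧
    (∀ h < k, isRec m x r (p.1 + h) (p.2 + h)) ∧
    (p.1 = 0 ∨ p.2 = 0 ∨ ¬ isRec m x r (p.1 - 1) (p.2 - 1)) ∧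
    (p.1 + k = n ∨ p.2 + k = n ∨ ¬ isRec m x r (p.1 + k) (p.2 + k))).card

open Classical in
/-- `n² · C^m_k(x,n,r)`: the number of pairs `(i,j)`, `0 ≤ i,j ≤ n-k`, with
`d^m_k(x^{(i)}, x^{(j)}) ≤ r`. -/
noncomputable def Ccount {S : Type*} [MetricSpace S] (m k : ℕ) (x : ℕ → S) (n : ℕ)
    (r : ℝ) : ℕ :=
  ((Finset.range (n + 1) ×ˢ Finset.range (n + 1)).filter fun p =>
    p.1 + k ≤ n ∧ p.2 + k ≤ n ∧
    dmax (m + k - 1) (shift p.1 x) (shift p.2 x) ≤ r).card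

/-- The correlation sum `C^m_k(x,n,r)`. -/
noncomputable def Csum {S : Type*} [MetricSpace S] (m k : ℕ) (x : ℕ → S) (n : ℕ)
    (r : ℝ) : ℝ :=
  (Ccount m k x n r : ℝ) / (n : ℝ) ^ 2

/-- The `k`-recurrence rate `RR^m_k(x,n,r) = (1/n²) Σ_{l ≥ k} l · L^m_l(x,n,r)`. -/
noncomputable def RRsum {S : Type*} [MetricSpace S] (m k : ℕ) (x : ℕ → S) (n : ℕ)
    (r : ℝ) : ℝ :=
  (1 / (n : ℝ) ^ 2) * ∑' l : ℕ, if k ≤ l then (l : ℝ) * (Lcount m l x n r : ℝ) else 0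

section RecurrencePlot

open Finset

variable {S : Type*} [MetricSpace S]

theorem dmax_le_iff {h : ℕ} (hh : 0 < h) {x y : ℕ → S} {r : ℝ} :
    dmax h x y ≤ r ↔ ∀ l < h, dist (x l) (y l) ≤ r := by
  refine ⟨fun H l hl => ?_, fun H => ?_⟩
  · calc dist (x l) (y l) = nndist (x l) (y l) := dist_nndist _ _
      _ ≤ dmax h x y :=
        NNReal.coe_le_coe.2 (le_sup (f := fun l => nndist (x l) (y l)) (mem_range.2 hl))
      _ ≤ r := H
  · have hr : 0 ≤ r := dist_nonneg.trans (H 0 hh)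
    rw [dmax, ← Real.le_toNNReal_iff_coe_le hr, Finset.sup_le_iff]
    intro l hl
    rw [Real.le_toNNReal_iff_coe_le hr, coe_nndist]
    exact H l (mem_range.1 hl)

theorem isRec_iff {m : ℕ} (hm : 0 < m) {x : ℕ → S} {r : ℝ} {i j : ℕ} :
    isRec m x r i j ↔ ∀ l < m, dist (x (i + l)) (x (j + l)) ≤ r :=
  dmax_le_iff hm

theorem dmax_shift_le_iff_forall_isRec {m j : ℕ} (hm : 0 < m) (hj : 0 < j) {x : ℕ → S}
    {r : ℝ} {i i' : ℕ} :
    dmax (m + j - 1) (shift i x) (shift i' x) ≤ r ↔ ∀ h < j, isRec m x r (i + h) (i' + h) := by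
  simp only [dmax_le_iff (by omega : 0 < m + j - 1), isRec_iff hm, shift, add_assoc]
  refine ⟨fun H h hh l hl => H (h + l) (by omega), fun H t ht => ?_⟩
  obtain ⟨h, l, rfl, hh, hl⟩ : ∃ h l, t = h + l ∧ h < j ∧ l < m :=
    ⟨min t (j - 1), t - min t (j - 1), by omega, by omega, by omega⟩
  exact H h hh l hl

variable (m : ℕ) (x : ℕ → S) (n : ℕ) (r : ℝ)

def IsDiagRun (l : ℕ) (p : ℕ × ℕ) : Prop :=
  p.1 + l ≤ n ∧ p.2 + l ≤ n ∧ ∀ h < l, isRec m x r (p.1 + h) (p.2 + h)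

def IsLineStart (p : ℕ × ℕ) : Prop :=
  p.1 = 0 ∨ p.2 = 0 ∨ ¬ isRec m x r (p.1 - 1) (p.2 - 1)

open Classical in
noncomputable def diagRunCount (l : ℕ) : ℕ :=
  #{p ∈ range (n + 1) ×ˢ range (n + 1) | IsDiagRun m x n r l p}

open Classical in
noncomputable def lineStartCount (l : ℕ) : ℕ :=
  #{p ∈ range (n + 1) ×ˢ range (n + 1) | IsDiagRun m x n r l p ∧ IsLineStart m x r p}

variable {m x n r}

theorem isDiagRun_succ_iff {l : ℕ} {p : ℕ × ℕ} :
    IsDiagRun m x n r (l + 1) p ↔ IsDiagRun m x n r l p ∧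
      p.1 + l ≠ n ∧ p.2 + l ≠ n ∧ isRec m x r (p.1 + l) (p.2 + l) := by
  simp only [IsDiagRun, Nat.forall_lt_succ_right]
  constructor
  · rintro ⟨h1, h2, hrun, hlast⟩
    exact ⟨⟨by omega, by omega, hrun⟩, by omega, by omega, hlast⟩
  · rintro ⟨⟨h1, h2, hrun⟩, h1', h2', hlast⟩
    exact ⟨by omega, by omega, hrun, hlast⟩

theorem isDiagRun_succ_iff_shift {l i j : ℕ} :
    IsDiagRun m x n r (l + 1) (i, j) ↔
      IsDiagRun m x n r l (i + 1, j + 1) ∧ ¬ IsLineStart m x r (i + 1, j + 1) := by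
  simp only [IsDiagRun, IsLineStart, Nat.forall_lt_succ_left, add_zero, add_tsub_cancel_right,
    add_right_comm _ 1, add_assoc, Nat.add_one_ne_zero, false_or, not_not]
  tauto

theorem mem_filter_isDiagRun_iff {l : ℕ} [DecidablePred (IsDiagRun m x n r l)] {p : ℕ × ℕ} :
    p ∈ {p ∈ range (n + 1) ×ˢ range (n + 1) | IsDiagRun m x n r l p} ↔ IsDiagRun m x n r l p := by
  refine mem_filter.trans (and_iff_right_of_imp fun ⟨h1, h2, _⟩ => ?_)
  simp only [mem_product, mem_range]
  omega

theorem eq_succ_of_not_isLineStart {p : ℕ × ℕ} (hp : ¬ IsLineStart m x r p) :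
    p = (p.1 - 1 + 1, p.2 - 1 + 1) := by
  simp only [IsLineStart, not_or] at hp
  ext <;> simp only <;> omega

theorem not_isDiagRun_of_lt {l : ℕ} (hl : n < l) (p : ℕ × ℕ) : ¬ IsDiagRun m x n r l p :=
  fun hp => by have := hp.1; omega

variable (m x n r)

theorem lineStartCount_eq_Lcount_add (l : ℕ) :
    lineStartCount m x n r l = Lcount m l x n r + lineStartCount m x n r (l + 1) := by
  classical
  rw [lineStartCount, ← card_filter_add_card_filter_not (IsDiagRun m x n r (l + 1)),
    filter_filter, filter_filter, add_comm]
  congr 1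
  · refine congrArg card (filter_congr fun p _ => ?_)
    rw [isDiagRun_succ_iff]
    unfold IsDiagRun IsLineStart
    tauto
  · refine congrArg card (filter_congr fun p _ => ?_)
    rw [isDiagRun_succ_iff]
    tauto

theorem diagRunCount_eq_lineStartCount_add (l : ℕ) :
    diagRunCount m x n r l = lineStartCount m x n r l + diagRunCount m x n r (l + 1) := by
  classical
  rw [diagRunCount, ← card_filter_add_card_filter_not (IsLineStart m x r), filter_filter]
  congr 1
  refine card_nbij' (fun p => (p.1 - 1, p.2 - 1)) (fun p => (p.1 + 1, p.2 + 1)) ?_ ?_ ?_ ?_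
  · intro p hp
    rw [mem_coe, mem_filter, mem_filter_isDiagRun_iff] at hp
    rw [eq_succ_of_not_isLineStart hp.2] at hp
    rw [mem_coe, mem_filter_isDiagRun_iff]
    exact isDiagRun_succ_iff_shift.2 hp
  · intro p hp
    rw [mem_coe, mem_filter_isDiagRun_iff] at hp
    rw [mem_coe, mem_filter, mem_filter_isDiagRun_iff]
    exact isDiagRun_succ_iff_shift.1 hp
  · intro p hp
    rw [mem_coe, mem_filter] at hp
    exact (eq_succ_of_not_isLineStart hp.2).symm
  · intro p _
    simp

variable {m x n r} in
theorem Ccount_eq_diagRunCount {j : ℕ} (hm : 0 < m) (hj : 0 < j) :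
    Ccount m j x n r = diagRunCount m x n r j := by
  classical
  exact congrArg card (filter_congr fun p _ => by
    rw [IsDiagRun, dmax_shift_le_iff_forall_isRec hm hj])

theorem diagRunCount_eq_zero_of_lt {l : ℕ} (hl : n < l) : diagRunCount m x n r l = 0 := by
  simp [diagRunCount, not_isDiagRun_of_lt hl]

theorem lineStartCount_eq_zero_of_lt {l : ℕ} (hl : n < l) : lineStartCount m x n r l = 0 := by
  simp [lineStartCount, not_isDiagRun_of_lt hl]

theorem Lcount_eq_zero_of_lt {l : ℕ} (hl : n < l) : Lcount m l x n r = 0 := by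
  have := lineStartCount_eq_Lcount_add m x n r l
  rw [lineStartCount_eq_zero_of_lt m x n r hl] at this
  omega

theorem tsum_ite_le_mul_Lcount (k : ℕ) :
    ∑' l : ℕ, (if k ≤ l then (l : ℝ) * (Lcount m l x n r : ℝ) else 0) =
      ∑ i ∈ range (n + 1), ((k + i : ℕ) : ℝ) * Lcount m (k + i) x n r := by
  rw [tsum_eq_sum (s := Ico k (k + (n + 1))), sum_Ico_eq_sum_range, Nat.add_sub_cancel_left]
  · exact sum_congr rfl fun i _ => if_pos (Nat.le_add_right k i)
  · intro l hl
    rw [mem_Ico, not_and_or, not_le, not_lt] at hl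
    rcases hl with hl | hl
    · exact if_neg (by omega)
    · rw [Lcount_eq_zero_of_lt m x n r (by omega)]
      simp

end RecurrencePlot

theorem sum_range_mul_add_of_telescoping {R : Type*} [CommRing R] {a b c : ℕ → R}
    (ha : ∀ j, a j = b j + a (j + 1)) (hb : ∀ j, b j = c j + b (j + 1)) (j d : ℕ) :
    ∑ i ∈ Finset.range d, ((j + i : ℕ) : R) * c (j + i) + (j + d : ℕ) * b (j + d) +
      a (j + d + 1) = j * b j + a (j + 1) := by
  induction d with
  | zero => simp
  | succ d ih =>
    rw [Finset.sum_range_succ, ← ih, ← add_assoc j d 1]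
    push_cast
    linear_combination -((j + d : R) * hb (j + d)) - ha (j + d + 1)

theorem recurrenceRate_eq_corrSums_general {S : Type*} [MetricSpace S] (x : ℕ → S) (m k n : ℕ)
    (hm : 1 ≤ m) (hk : 1 ≤ k) (r : ℝ) :
    RRsum m k x n r =
      (k : ℝ) * Csum m k x n r - ((k : ℝ) - 1) * Csum m (k + 1) x n r := by
  have hsum : ∑' l : ℕ, (if k ≤ l then (l : ℝ) * (Lcount m l x n r : ℝ) else 0) =
      k * (lineStartCount m x n r k : ℝ) + diagRunCount m x n r (k + 1) := by
    rw [tsum_ite_le_mul_Lcount, ← sum_range_mul_add_of_telescoping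
      (a := fun l => (diagRunCount m x n r l : ℝ)) (b := fun l => (lineStartCount m x n r l : ℝ))
      (c := fun l => (Lcount m l x n r : ℝ))
      (fun l => by exact_mod_cast diagRunCount_eq_lineStartCount_add m x n r l)
      (fun l => by exact_mod_cast lineStartCount_eq_Lcount_add m x n r l) k (n + 1),
      lineStartCount_eq_zero_of_lt m x n r (by omega),
      diagRunCount_eq_zero_of_lt m x n r (by omega)]
    simp
  rw [RRsum, Csum, Csum, hsum, Ccount_eq_diagRunCount hm hk,
    Ccount_eq_diagRunCount hm k.succ_pos, diagRunCount_eq_lineStartCount_add m x n r k]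
  push_cast
  ring

/-- For every metric space `(S,ρ)`, every sequence `x : ℕ → S`,
all integers `m, k, n ≥ 1` and every real `r ≥ 0`, the `k`-recurrence rate satisfies
`RR^m_k(x,n,r) = k · C^m_k(x,n,r) − (k − 1) · C^m_{k+1}(x,n,r)`. -/
theorem recurrenceRate_eq_corrSums {S : Type*} [MetricSpace S] (x : ℕ → S) (m k n : ℕ)
    (hm : 1 ≤ m) (hk : 1 ≤ k) (hn : 1 ≤ n) (r : ℝ) (hr : 0 ≤ r) :
    RRsum m k x n r =
      (k : ℝ) * Csum m k x n r - ((k : ℝ) - 1) * Csum m (k + 1) x n r :=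
  recurrenceRate_eq_corrSums_general x m k n hm hk r
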